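/- For a consistent system (X W⋆ = Y for some W⋆ with columns in range(X^T)) and iterates W_k with columns in range(X^T), the randomized Kaczmarz method with probabilities p_i = ‖x_i‖²/‖X‖_F² satisfies E[‖W_{k+1} − W⋆‖_F² | W_k] ≤ (1 − σ_min⁺(X)²/‖X‖_F²) ‖W_k − W⋆‖_F². -/

import Mathlib

open Matrix Finset

/-- The square of the smallest nonzero singular value of `X`, i.e. the smallest
positive eigenvalue of `Xᵀ X`. -/
noncomputable def sMinPosSq {n d : ℕ} (X : Matrix (Fin n) (Fin d) ℝ) : ℝ :=
  sInf {t : ℝ | 0 < t ∧ ∃ v : Fin d → ℝ, v ≠ 0 ∧ (Xᵀ * X).mulVec v = t • v}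

/-! Write `E = W_k − W⋆`. The update with row `x_i` replaces each column `e` of `E` by its
orthogonal projection `e − (⟨x_i, e⟩ / ‖x_i‖²) x_i` onto `x_iᗮ`, which lowers `‖e‖²` by
`⟨x_i, e⟩² / ‖x_i‖²`. Averaging with the weights `‖x_i‖² / ‖X‖_F²` therefore lowers `‖E‖_F²` by
exactly `‖X E‖_F² / ‖X‖_F²`. The columns of `E` lie in `range Xᵀ = (ker X)ᗮ`, so in an orthonormal
eigenbasis of `Xᵀ X` they only have components along positive eigenvalues, all at least
`σ_min⁺(X)²`; hence `‖X E‖_F² ≥ σ_min⁺(X)² ‖E‖_F²`. -/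

section

variable {ι κ : Type*} [Fintype ι] [Fintype κ]

theorem sum_sum_sq_eq_sum_dotProduct_transpose (A : Matrix ι κ ℝ) :
    ∑ i, ∑ j, A i j ^ 2 = ∑ j, Aᵀ j ⬝ᵥ Aᵀ j := by
  rw [sum_comm]
  simp only [dotProduct, transpose_apply, sq]

theorem mul_dotProduct_self_sub_proj (x e : ι → ℝ) :
    (x ⬝ᵥ x) * ((e - ((x ⬝ᵥ x)⁻¹ * (x ⬝ᵥ e)) • x) ⬝ᵥ (e - ((x ⬝ᵥ x)⁻¹ * (x ⬝ᵥ e)) • x)) =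
      (x ⬝ᵥ x) * (e ⬝ᵥ e) - (x ⬝ᵥ e) ^ 2 := by
  by_cases hx : x ⬝ᵥ x = 0
  · simp [dotProduct_self_eq_zero.mp hx]
  simp only [sub_dotProduct, dotProduct_sub, smul_dotProduct, dotProduct_smul, smul_eq_mul,
    dotProduct_comm e x]
  field_simp
  ring

theorem mul_sum_sq_kaczmarz_step (x : ι → ℝ) (W W' : Matrix ι κ ℝ) :
    (x ⬝ᵥ x) * ∑ l, ∑ j,
        (W + (x ⬝ᵥ x)⁻¹ • vecMulVec x (vecMul x W' - vecMul x W) - W') l j ^ 2 =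
      (x ⬝ᵥ x) * ∑ l, ∑ j, (W - W') l j ^ 2 - ∑ j, vecMul x (W - W') j ^ 2 := by
  have hcol (j : κ) : (W + (x ⬝ᵥ x)⁻¹ • vecMulVec x (vecMul x W' - vecMul x W) - W')ᵀ j =
      (W - W')ᵀ j - ((x ⬝ᵥ x)⁻¹ * (x ⬝ᵥ (W - W')ᵀ j)) • x := by
    ext l
    have hres : x ⬝ᵥ (W - W')ᵀ j = vecMul x W j - vecMul x W' j := by
      rw [← Pi.sub_apply, ← vecMul_sub]
      rfl
    simp only [transpose_apply, Matrix.sub_apply, Matrix.add_apply, Matrix.smul_apply,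
      vecMulVec_apply, Pi.sub_apply, Pi.smul_apply, smul_eq_mul, hres]
    ring
  simp only [sum_sum_sq_eq_sum_dotProduct_transpose, hcol, mul_sum, mul_dotProduct_self_sub_proj,
    ← sum_sub_distrib]
  rfl

theorem OrthonormalBasis.sum_dotProduct_mul_dotProduct
    (b : OrthonormalBasis ι ℝ (EuclideanSpace ℝ ι)) (x y : ι → ℝ) :
    ∑ j, (b j ⬝ᵥ x) * (b j ⬝ᵥ y) = x ⬝ᵥ y := by
  simpa [EuclideanSpace.inner_toLp_toLp, EuclideanSpace.inner_eq_star_dotProduct, dotProduct_comm]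
    using b.sum_inner_mul_inner (WithLp.toLp 2 x) (WithLp.toLp 2 y)

theorem Matrix.IsHermitian.dotProduct_mulVec_eq_sum [DecidableEq ι] {A : Matrix ι ι ℝ}
    (hA : A.IsHermitian) (v : ι → ℝ) :
    v ⬝ᵥ (A *ᵥ v) = ∑ j, hA.eigenvalues j * (hA.eigenvectorBasis j ⬝ᵥ v) ^ 2 := by
  rw [← hA.eigenvectorBasis.sum_dotProduct_mul_dotProduct]
  refine sum_congr rfl fun j _ => ?_
  rw [dotProduct_mulVec, ← mulVec_transpose, ← conjTranspose_eq_transpose_of_trivial, hA.eq,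
    hA.mulVec_eigenvectorBasis, smul_dotProduct, smul_eq_mul]
  ring

theorem dotProduct_mulVec_transpose_mul_self (X : Matrix κ ι ℝ) (v : ι → ℝ) :
    v ⬝ᵥ ((Xᵀ * X) *ᵥ v) = X *ᵥ v ⬝ᵥ X *ᵥ v := by
  rw [← mulVec_mulVec, dotProduct_mulVec, vecMul_transpose]

end

theorem mul_sub_div_le_one_sub_div_mul {F e R s : ℝ} (hF : 0 ≤ F) (he : 0 ≤ e)
    (hR : s * e ≤ R) : (F * e - R) / F ≤ (1 - s / F) * e := by
  rcases hF.eq_or_lt with hzero | hpos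
  · simpa [← hzero] using he
  · rw [div_le_iff₀ hpos, sub_mul, one_mul, div_mul_eq_mul_div, sub_mul,
      div_mul_cancel₀ _ hpos.ne']
    linarith

theorem sMinPosSq_le {n d : ℕ} {X : Matrix (Fin n) (Fin d) ℝ} {μ : ℝ} (hμ : 0 < μ)
    {v : Fin d → ℝ} (hv : v ≠ 0) (h : (Xᵀ * X) *ᵥ v = μ • v) : sMinPosSq X ≤ μ :=
  csInf_le ⟨0, fun _ ht => ht.1.le⟩ ⟨hμ, v, hv, h⟩

theorem sMinPosSq_mul_dotProduct_le {n d : ℕ} (X : Matrix (Fin n) (Fin d) ℝ) (u : Fin n → ℝ) :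
    sMinPosSq X * (Xᵀ *ᵥ u ⬝ᵥ Xᵀ *ᵥ u) ≤ X *ᵥ (Xᵀ *ᵥ u) ⬝ᵥ X *ᵥ (Xᵀ *ᵥ u) := by
  have hX : (Xᵀ * X).PosSemidef := by simpa using posSemidef_conjTranspose_mul_self X
  have hA : (Xᵀ * X).IsHermitian := hX.1
  set b := hA.eigenvectorBasis
  set v := Xᵀ *ᵥ u
  rw [← dotProduct_mulVec_transpose_mul_self X v, hA.dotProduct_mulVec_eq_sum,
    ← b.sum_dotProduct_mul_dotProduct v v, mul_sum]
  refine sum_le_sum fun j _ => ?_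
  rw [← sq]
  rcases (hX.eigenvalues_nonneg j).eq_or_lt with hzero | hpos
  · -- `b j` lies in `ker X`, which is orthogonal to `v ∈ range Xᵀ`
    have hXb : X *ᵥ b j = 0 := by
      rw [← dotProduct_self_eq_zero, ← dotProduct_mulVec_transpose_mul_self,
        hA.mulVec_eigenvectorBasis, ← hzero, zero_smul, dotProduct_zero]
    have hbv : b j ⬝ᵥ v = 0 := by
      rw [dotProduct_mulVec, vecMul_transpose, hXb, zero_dotProduct]
    simp [b, v, hbv]
  · have hbj : (b j : Fin d → ℝ) ≠ 0 := fun h =>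
      b.orthonormal.ne_zero j (by ext i; exact congrFun h i)
    exact mul_le_mul_of_nonneg_right (sMinPosSq_le hpos hbj (hA.mulVec_eigenvectorBasis j))
      (sq_nonneg _)

theorem sMinPosSq_mul_sum_sq_le {n d : ℕ} {κ : Type*} [Fintype κ] (X : Matrix (Fin n) (Fin d) ℝ)
    (E : Matrix (Fin d) κ ℝ) (hE : ∀ j, ∃ u, Xᵀ *ᵥ u = Eᵀ j) :
    sMinPosSq X * ∑ l, ∑ j, E l j ^ 2 ≤ ∑ i, ∑ j, (X * E) i j ^ 2 := by
  rw [sum_sum_sq_eq_sum_dotProduct_transpose, sum_sum_sq_eq_sum_dotProduct_transpose, mul_sum]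
  refine sum_le_sum fun j _ => ?_
  obtain ⟨u, hu⟩ := hE j
  change _ ≤ X *ᵥ Eᵀ j ⬝ᵥ X *ᵥ Eᵀ j
  rw [← hu]
  exact sMinPosSq_mul_dotProduct_le X u

theorem kaczmarz_consistent_contraction_general
    {n d g : ℕ} (X : Matrix (Fin n) (Fin d) ℝ)
    (Y : Matrix (Fin n) (Fin g) ℝ) (Wk Ws : Matrix (Fin d) (Fin g) ℝ)
    (hconsistent : Y = X * Ws)
    (hWs : ∀ j, ∃ u : Fin n → ℝ, Xᵀ.mulVec u = fun l => Ws l j)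
    (hWk : ∀ j, ∃ u : Fin n → ℝ, Xᵀ.mulVec u = fun l => Wk l j) :
    let frob : ∀ {a b : ℕ}, Matrix (Fin a) (Fin b) ℝ → ℝ :=
      fun A => ∑ i, ∑ j, (A i j) ^ 2
    let p : Fin n → ℝ := fun i => (X i ⬝ᵥ X i) / frob X
    let Wnext : Fin n → Matrix (Fin d) (Fin g) ℝ := fun i =>
      Wk + (X i ⬝ᵥ X i)⁻¹ • vecMulVec (X i) (Y i - Matrix.vecMul (X i) Wk)
    (∑ i, p i * frob (Wnext i - Ws)) ≤
      (1 - sMinPosSq X / frob X) * frob (Wk - Ws) := by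
  intro frob p Wnext
  have hrow (i : Fin n) : (X i ⬝ᵥ X i) * frob (Wnext i - Ws) =
      (X i ⬝ᵥ X i) * frob (Wk - Ws) - ∑ j, (X * (Wk - Ws)) i j ^ 2 := by
    subst hconsistent
    exact mul_sum_sq_kaczmarz_step (X i) Wk Ws
  have hfrobX : frob X = ∑ i, X i ⬝ᵥ X i := by
    simp only [frob, dotProduct, sq]
  -- this holds also when `frob X = 0`, both sides then being `0` since `x / 0 = 0`
  have hmean : ∑ i, p i * frob (Wnext i - Ws) =
      (frob X * frob (Wk - Ws) - frob (X * (Wk - Ws))) / frob X := by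
    simp only [p, div_mul_eq_mul_div, ← sum_div, hrow, sum_sub_distrib, ← sum_mul, hfrobX]
    rfl
  have hspec : sMinPosSq X * frob (Wk - Ws) ≤ frob (X * (Wk - Ws)) := by
    refine sMinPosSq_mul_sum_sq_le X _ fun j => ?_
    obtain ⟨uk, huk⟩ := hWk j
    obtain ⟨us, hus⟩ := hWs j
    exact ⟨uk - us, by rw [mulVec_sub, huk, hus]; rfl⟩
  rw [hmean]
  exact mul_sub_div_le_one_sub_div_mul (by positivity) (by positivity) hspec

/-- For a consistent system `Y = X W⋆` with the columns of `W⋆` and of `W_k` in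
the range of `Xᵀ`, the randomized Kaczmarz method with probabilities
`p_i = ‖x_i‖²/‖X‖_F²` satisfies
`E[‖W_{k+1} − W⋆‖_F² | W_k] ≤ (1 − σ_min⁺(X)²/‖X‖_F²) ‖W_k − W⋆‖_F²`. -/
theorem kaczmarz_consistent_contraction
    {n d g : ℕ} (X : Matrix (Fin n) (Fin d) ℝ) (hrows : ∀ i, X i ≠ 0)
    (Y : Matrix (Fin n) (Fin g) ℝ) (Wk Ws : Matrix (Fin d) (Fin g) ℝ)
    (hconsistent : Y = X * Ws)
    (hWs : ∀ j, ∃ u : Fin n → ℝ, Xᵀ.mulVec u = fun l => Ws l j)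
    (hWk : ∀ j, ∃ u : Fin n → ℝ, Xᵀ.mulVec u = fun l => Wk l j) :
    let frob : ∀ {a b : ℕ}, Matrix (Fin a) (Fin b) ℝ → ℝ :=
      fun A => ∑ i, ∑ j, (A i j) ^ 2
    let p : Fin n → ℝ := fun i => (X i ⬝ᵥ X i) / frob X
    let Wnext : Fin n → Matrix (Fin d) (Fin g) ℝ := fun i =>
      Wk + (X i ⬝ᵥ X i)⁻¹ • vecMulVec (X i) (Y i - Matrix.vecMul (X i) Wk)
    (∑ i, p i * frob (Wnext i - Ws)) ≤
      (1 - sMinPosSq X / frob X) * frob (Wk - Ws) :=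
  kaczmarz_consistent_contraction_general X Y Wk Ws hconsistent hWs hWk
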